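/- arXiv:2305.19620 — 9 statements merged into one kernel-verified Lean document; each statement's English description precedes it below -/
import Mathlib

section
/- A connected graph G on n vertices satisfies mdim(G) = n if and only if every vertex of G has a maximal neighbor. -/
open SimpleGraph

variable {V : Type*}

/-- Distance from a vertex `w` to an (unordered) edge `e`:
the minimum of the distances to the two endpoints. -/
noncomputable def edgeVertexDist (G : SimpleGraph V) (w : V) (e : Sym2 V) : ℕ :=
  Sym2.lift ⟨fun a b => min (G.dist a w) (G.dist b w), fun a b => by simp [min_comm]⟩ e

/-- Distance from a vertex `w` to a mixed element (vertex or edge). -/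
noncomputable def mixedDist (G : SimpleGraph V) (w : V) : V ⊕ G.edgeSet → ℕ
  | Sum.inl v => G.dist v w
  | Sum.inr e => edgeVertexDist G w e.val

/-- `W` is a mixed resolving set: every two distinct mixed elements are
distinguished by the distance to some vertex of `W`. -/
def IsMixedResolving (G : SimpleGraph V) (W : Set V) : Prop :=
  ∀ x y : V ⊕ G.edgeSet, x ≠ y → ∃ w ∈ W, mixedDist G w x ≠ mixedDist G w y

/-- The mixed metric dimension of a finite graph. -/
noncomputable def mdim [Fintype V] (G : SimpleGraph V) : ℕ :=
  sInf {n | ∃ W : Finset V, W.card = n ∧ IsMixedResolving G ↑W}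

/-- `y` is a maximal neighbor of `x`: `y` is a neighbor of `x` adjacent to
every neighbor of `x` other than `y` itself. -/
def IsMaxNeighbor (G : SimpleGraph V) (x y : V) : Prop :=
  G.Adj x y ∧ ∀ z, G.Adj x z → z ≠ y → G.Adj y z

lemma edgeVertexDist_mk (G : SimpleGraph V) (w a b : V) :
    edgeVertexDist G w s(a,b) = min (G.dist a w) (G.dist b w) := rfl

/-- Key distance lemma: if `y` is a maximal neighbor of `v`, then for `w ≠ v`
we have `d(y,w) ≤ d(v,w)`. -/
lemma maxNeighbor_dist_le (G : SimpleGraph V) (hG : G.Connected) {v y : V}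
    (h : IsMaxNeighbor G v y) {w : V} (hw : w ≠ v) :
    G.dist y w ≤ G.dist v w := by
  obtain ⟨p, hp⟩ := (hG v w).exists_walk_length_eq_dist
  cases p with
  | nil => exact absurd rfl hw
  | @cons _ z _ hadj q =>
    rw [Walk.length_cons] at hp
    by_cases hzy : z = y
    · subst hzy
      have := SimpleGraph.dist_le q
      omega
    · have hyz : G.Adj y z := h.2 z hadj hzy
      have := SimpleGraph.dist_le (Walk.cons hyz q)
      rw [Walk.length_cons] at this
      omega

/-- Helper for `sym2_witness`: the case where `a` lies in the first pair but
not the second. -/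
lemma sym2_witness_aux {a b c d v : V} (hab : a ≠ b) (hcd : c ≠ d)
    (ha1 : a ≠ c) (ha2 : a ≠ d) :
    ∃ x, x ≠ v ∧ ((x = a ∨ x = b) ∧ (x ≠ c ∧ x ≠ d) ∨
      ((x = c ∨ x = d) ∧ (x ≠ a ∧ x ≠ b))) := by
  by_cases hav : a = v
  · by_cases hb : b = c ∨ b = d
    · rcases hb with rfl | rfl
      · exact ⟨d, fun hh => ha2 (hav.trans hh.symm),
          Or.inr ⟨Or.inr rfl, Ne.symm ha2, Ne.symm hcd⟩⟩
      · exact ⟨c, fun hh => ha1 (hav.trans hh.symm),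
          Or.inr ⟨Or.inl rfl, Ne.symm ha1, hcd⟩⟩
    · push_neg at hb
      exact ⟨b, fun hh => hab (hav.trans hh.symm), Or.inl ⟨Or.inr rfl, hb.1, hb.2⟩⟩
  · exact ⟨a, hav, Or.inl ⟨Or.inl rfl, ha1, ha2⟩⟩

/-- Witness element in the symmetric difference of two distinct nondiagonal
`Sym2`s, avoiding a given vertex `v`. -/
lemma sym2_witness {a b c d v : V} (hab : a ≠ b) (hcd : c ≠ d)
    (hne : s(a,b) ≠ s(c,d)) :
    ∃ x, x ≠ v ∧ ((x ∈ s(a,b) ∧ x ∉ s(c,d)) ∨ (x ∈ s(c,d) ∧ x ∉ s(a,b))) := by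
  rw [Ne, Sym2.eq_iff] at hne
  push_neg at hne
  simp only [Sym2.mem_iff, not_or]
  by_cases h1 : a = c ∨ a = d
  · by_cases h2 : b = c ∨ b = d
    · exfalso
      rcases h1 with rfl | rfl <;> rcases h2 with rfl | rfl <;> simp_all
    · push_neg at h2
      obtain ⟨x, hxv, hx⟩ := sym2_witness_aux (v := v) hab.symm hcd h2.1 h2.2
      exact ⟨x, hxv, by tauto⟩
  · push_neg at h1
    exact sym2_witness_aux hab hcd h1.1 h1.2

/-- Two distinct vertices are resolved by a witness avoiding `v`. -/
lemma resolve_vertex_vertex (G : SimpleGraph V) (hG : G.Connected) (v : V)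
    {u₁ u₂ : V} (h : u₁ ≠ u₂) :
    ∃ w, w ≠ v ∧ G.dist u₁ w ≠ G.dist u₂ w := by
  by_cases h1 : u₁ = v
  · refine ⟨u₂, fun hh => h (hh ▸ h1), ?_⟩
    have := hG.pos_dist_of_ne h
    simp only [SimpleGraph.dist_self]
    omega
  · refine ⟨u₁, h1, ?_⟩
    have := hG.pos_dist_of_ne h.symm
    simp only [SimpleGraph.dist_self]
    omega

/-- Two distinct edges are resolved by a witness avoiding `v`. -/
lemma resolve_edge_edge (G : SimpleGraph V) (hG : G.Connected) (v : V)
    {a b c d : V} (hab : a ≠ b) (hcd : c ≠ d) (hne : s(a,b) ≠ s(c,d)) :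
    ∃ w, w ≠ v ∧ edgeVertexDist G w s(a,b) ≠ edgeVertexDist G w s(c,d) := by
  obtain ⟨x, hxv, hx⟩ := sym2_witness (v := v) hab hcd hne
  refine ⟨x, hxv, ?_⟩
  rw [edgeVertexDist_mk, edgeVertexDist_mk]
  rcases hx with ⟨hx1, hx2⟩ | ⟨hx1, hx2⟩
  · have hxm : x = a ∨ x = b := Sym2.mem_iff.1 hx1
    have hxc : ¬(x = c ∨ x = d) := fun hh => hx2 (Sym2.mem_iff.2 hh)
    push_neg at hxc
    have h1 : min (G.dist a x) (G.dist b x) = 0 := by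
      rcases hxm with rfl | rfl <;> simp [SimpleGraph.dist_self]
    have h2 : 0 < min (G.dist c x) (G.dist d x) :=
      lt_min (hG.pos_dist_of_ne (Ne.symm hxc.1)) (hG.pos_dist_of_ne (Ne.symm hxc.2))
    omega
  · have hxm : x = c ∨ x = d := Sym2.mem_iff.1 hx1
    have hxc : ¬(x = a ∨ x = b) := fun hh => hx2 (Sym2.mem_iff.2 hh)
    push_neg at hxc
    have h1 : min (G.dist c x) (G.dist d x) = 0 := by
      rcases hxm with rfl | rfl <;> simp [SimpleGraph.dist_self]
    have h2 : 0 < min (G.dist a x) (G.dist b x) :=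
      lt_min (hG.pos_dist_of_ne (Ne.symm hxc.1)) (hG.pos_dist_of_ne (Ne.symm hxc.2))
    omega

/-- Endpoint case with the non-maximal-neighbor hypothesis: a vertex and an
edge incident to it are resolved by a witness avoiding `v`. -/
lemma resolve_endpoint (G : SimpleGraph V) (hG : G.Connected) (v : V)
    (hv : ∀ y, ¬ IsMaxNeighbor G v y) {a b : V} (hab : G.Adj a b) :
    ∃ w, w ≠ v ∧ G.dist a w ≠ min (G.dist a w) (G.dist b w) := by
  by_cases hbv : b = v
  · subst hbv
    have hnm := hv a
    rw [IsMaxNeighbor] at hnm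
    push_neg at hnm
    obtain ⟨z, hz1, hz2, hz3⟩ := hnm hab.symm
    refine ⟨z, hz1.ne', ?_⟩
    have hdvz : G.dist b z = 1 := SimpleGraph.dist_eq_one_iff_adj.2 hz1
    have h0 : 0 < G.dist a z := hG.pos_dist_of_ne hz2.symm
    have h1 : G.dist a z ≠ 1 := fun hh => hz3 (SimpleGraph.dist_eq_one_iff_adj.1 hh)
    rw [hdvz]
    omega
  · refine ⟨b, hbv, ?_⟩
    have h1 : G.dist a b = 1 := SimpleGraph.dist_eq_one_iff_adj.2 hab
    have h0 : G.dist b b = 0 := SimpleGraph.dist_self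
    rw [h1, h0]
    simp

/-- Vertex–edge pair resolved by a witness avoiding `v`, given `v` has no
maximal neighbor. -/
lemma resolve_vertex_edge (G : SimpleGraph V) (hG : G.Connected) (v : V)
    (hv : ∀ y, ¬ IsMaxNeighbor G v y) {u a b : V} (hab : G.Adj a b) :
    ∃ w, w ≠ v ∧ G.dist u w ≠ edgeVertexDist G w s(a,b) := by
  by_cases hua : u = a
  · subst hua
    obtain ⟨w, hw1, hw2⟩ := resolve_endpoint G hG v hv hab
    exact ⟨w, hw1, by rwa [edgeVertexDist_mk]⟩
  · by_cases hub : u = b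
    · subst hub
      obtain ⟨w, hw1, hw2⟩ := resolve_endpoint G hG v hv hab.symm
      refine ⟨w, hw1, ?_⟩
      rw [edgeVertexDist_mk, min_comm]
      exact hw2
    · by_cases huv : u = v
      · refine ⟨a, fun hh => hua (huv.trans hh.symm), ?_⟩
        rw [edgeVertexDist_mk]
        have h1 : 0 < G.dist u a := hG.pos_dist_of_ne hua
        have h2 : G.dist a a = 0 := SimpleGraph.dist_self
        omega
      · refine ⟨u, huv, ?_⟩
        rw [edgeVertexDist_mk]
        have h1 : G.dist u u = 0 := SimpleGraph.dist_self
        have h2 : 0 < G.dist a u := hG.pos_dist_of_ne (Ne.symm hua)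
        have h3 : 0 < G.dist b u := hG.pos_dist_of_ne (Ne.symm hub)
        omega

/-- If `v` has no maximal neighbor, then every pair of distinct mixed elements
is resolved by some witness different from `v`. -/
lemma key_resolve (G : SimpleGraph V) (hG : G.Connected) (v : V)
    (hv : ∀ y, ¬ IsMaxNeighbor G v y) :
    ∀ x y : V ⊕ G.edgeSet, x ≠ y →
      ∃ w, w ≠ v ∧ mixedDist G w x ≠ mixedDist G w y := by
  rintro (u₁ | ⟨e, he⟩) (u₂ | ⟨f, hf⟩) hxy
  · have h : u₁ ≠ u₂ := fun hh => hxy (hh ▸ rfl)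
    obtain ⟨w, hw1, hw2⟩ := resolve_vertex_vertex G hG v h
    exact ⟨w, hw1, hw2⟩
  · induction f using Sym2.ind with
    | _ a b =>
      have hab : G.Adj a b := G.mem_edgeSet.1 hf
      obtain ⟨w, hw1, hw2⟩ := resolve_vertex_edge G hG v hv (u := u₁) hab
      exact ⟨w, hw1, hw2⟩
  · induction e using Sym2.ind with
    | _ a b =>
      have hab : G.Adj a b := G.mem_edgeSet.1 he
      obtain ⟨w, hw1, hw2⟩ := resolve_vertex_edge G hG v hv (u := u₂) hab
      exact ⟨w, hw1, hw2.symm⟩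
  · induction e using Sym2.ind with
    | _ a b =>
      induction f using Sym2.ind with
      | _ c d =>
        have hab : G.Adj a b := G.mem_edgeSet.1 he
        have hcd : G.Adj c d := G.mem_edgeSet.1 hf
        have hne : s(a,b) ≠ s(c,d) := fun hh => hxy (by simp [hh])
        obtain ⟨w, hw1, hw2⟩ := resolve_edge_edge G hG v hab.ne hcd.ne hne
        exact ⟨w, hw1, hw2⟩

/-- The full vertex set is always a mixed resolving set of a connected graph. -/
lemma univ_resolving (G : SimpleGraph V) (hG : G.Connected) :
    IsMixedResolving G (Set.univ : Set V) := by
  have hne : Nonempty V := hG.nonempty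
  rintro (u₁ | ⟨e, he⟩) (u₂ | ⟨f, hf⟩) hxy
  · have h : u₁ ≠ u₂ := fun hh => hxy (hh ▸ rfl)
    refine ⟨u₁, Set.mem_univ _, ?_⟩
    show G.dist u₁ u₁ ≠ G.dist u₂ u₁
    have := hG.pos_dist_of_ne h.symm
    simp only [SimpleGraph.dist_self]
    omega
  · induction f using Sym2.ind with
    | _ a b =>
      have hab : G.Adj a b := G.mem_edgeSet.1 hf
      by_cases hua : u₁ = a
      · subst hua
        refine ⟨b, Set.mem_univ _, ?_⟩
        show G.dist u₁ b ≠ edgeVertexDist G b s(u₁, b)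
        rw [edgeVertexDist_mk, SimpleGraph.dist_eq_one_iff_adj.2 hab,
          SimpleGraph.dist_self]
        simp
      · by_cases hub : u₁ = b
        · subst hub
          refine ⟨a, Set.mem_univ _, ?_⟩
          show G.dist u₁ a ≠ edgeVertexDist G a s(a, u₁)
          rw [edgeVertexDist_mk, SimpleGraph.dist_eq_one_iff_adj.2 hab.symm,
            SimpleGraph.dist_self]
          simp
        · refine ⟨u₁, Set.mem_univ _, ?_⟩
          show G.dist u₁ u₁ ≠ edgeVertexDist G u₁ s(a, b)
          rw [edgeVertexDist_mk, SimpleGraph.dist_self]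
          have h2 : 0 < G.dist a u₁ := hG.pos_dist_of_ne (fun hh => hua hh.symm)
          have h3 : 0 < G.dist b u₁ := hG.pos_dist_of_ne (fun hh => hub hh.symm)
          omega
  · induction e using Sym2.ind with
    | _ a b =>
      have hab : G.Adj a b := G.mem_edgeSet.1 he
      by_cases hua : u₂ = a
      · subst hua
        refine ⟨b, Set.mem_univ _, ?_⟩
        show edgeVertexDist G b s(u₂, b) ≠ G.dist u₂ b
        rw [edgeVertexDist_mk, SimpleGraph.dist_eq_one_iff_adj.2 hab,
          SimpleGraph.dist_self]
        simp
      · by_cases hub : u₂ = b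
        · subst hub
          refine ⟨a, Set.mem_univ _, ?_⟩
          show edgeVertexDist G a s(a, u₂) ≠ G.dist u₂ a
          rw [edgeVertexDist_mk, SimpleGraph.dist_eq_one_iff_adj.2 hab.symm,
            SimpleGraph.dist_self]
          simp
        · refine ⟨u₂, Set.mem_univ _, ?_⟩
          show edgeVertexDist G u₂ s(a, b) ≠ G.dist u₂ u₂
          rw [edgeVertexDist_mk, SimpleGraph.dist_self]
          have h2 : 0 < G.dist a u₂ := hG.pos_dist_of_ne (fun hh => hua hh.symm)
          have h3 : 0 < G.dist b u₂ := hG.pos_dist_of_ne (fun hh => hub hh.symm)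
          omega
  · induction e using Sym2.ind with
    | _ a b =>
      induction f using Sym2.ind with
      | _ c d =>
        have hab : G.Adj a b := G.mem_edgeSet.1 he
        have hcd : G.Adj c d := G.mem_edgeSet.1 hf
        have hne2 : s(a,b) ≠ s(c,d) := fun hh => hxy (by simp [hh])
        obtain ⟨w, _, hw2⟩ :=
          resolve_edge_edge G hG (Classical.arbitrary V) hab.ne hcd.ne hne2
        exact ⟨w, Set.mem_univ _, hw2⟩

/-- If `v` has a maximal neighbor, then `v` belongs to every mixed resolving set. -/
lemma mem_of_maxNeighbor (G : SimpleGraph V) (hG : G.Connected) {v y : V}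
    (h : IsMaxNeighbor G v y) {W : Set V} (hW : IsMixedResolving G W) : v ∈ W := by
  have hvy : s(v, y) ∈ G.edgeSet := G.mem_edgeSet.2 h.1
  obtain ⟨w, hwW, hw⟩ := hW (Sum.inl y) (Sum.inr ⟨s(v, y), hvy⟩) (by simp)
  by_cases hwv : w = v
  · exact hwv ▸ hwW
  · exfalso
    apply hw
    show G.dist y w = edgeVertexDist G w s(v, y)
    rw [edgeVertexDist_mk]
    have := maxNeighbor_dist_le G hG h hwv
    omega

/-- A connected graph `G` on `n` vertices satisfies `mdim G = n` iff every
vertex of `G` has a maximal neighbor. -/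
theorem stmt_0 [Fintype V] (G : SimpleGraph V) (hG : G.Connected) :
    mdim G = Fintype.card V ↔ ∀ v : V, ∃ y : V, IsMaxNeighbor G v y := by
  have hne : Nonempty V := hG.nonempty
  classical
  constructor
  · intro hm
    by_contra hc
    push_neg at hc
    obtain ⟨v, hv⟩ := hc
    have hres : IsMixedResolving G ↑(Finset.univ.erase v) := by
      intro x y hxy
      obtain ⟨w, hwv, hw⟩ := key_resolve G hG v hv x y hxy
      exact ⟨w, by simp [hwv], hw⟩
    have hle : mdim G ≤ Fintype.card V - 1 := by
      apply Nat.sInf_le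
      exact ⟨Finset.univ.erase v, by simp [Finset.card_erase_of_mem], hres⟩
    have hpos : 0 < Fintype.card V := Fintype.card_pos
    omega
  · intro hmax
    have h1 : ∀ (W : Finset V), IsMixedResolving G ↑W → W = Finset.univ := by
      intro W hW
      apply Finset.eq_univ_of_forall
      intro v
      obtain ⟨y, hy⟩ := hmax v
      exact mem_of_maxNeighbor G hG hy hW
    have hset : {n | ∃ W : Finset V, W.card = n ∧ IsMixedResolving G ↑W}
        = {Fintype.card V} := by
      ext n
      simp only [Set.mem_setOf_eq, Set.mem_singleton_iff]
      constructor
      · rintro ⟨W, rfl, hW⟩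
        rw [h1 W hW]
        simp
      · rintro rfl
        refine ⟨Finset.univ, by simp, ?_⟩
        have := univ_resolving G hG
        simpa using this
    rw [mdim, hset]
    exact csInf_singleton _
end

section
/- If W is a mixed resolving set of a connected graph G and v ∈ V(G) has a maximal neighbor, then v ∈ W. -/
open SimpleGraph

variable {V : Type*}

/-- If `W` is a mixed resolving set of a connected graph `G` and `v` has a
maximal neighbor, then `v ∈ W`. -/
theorem stmt_1 (G : SimpleGraph V) (hG : G.Connected) (W : Set V)
    (hW : IsMixedResolving G W) (v : V) (hv : ∃ y : V, IsMaxNeighbor G v y) :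
    v ∈ W := by
  obtain ⟨y, hyadj, hymax⟩ := hv
  have he : s(v, y) ∈ G.edgeSet := hyadj
  obtain ⟨w, hwW, hwne⟩ := hW (Sum.inr ⟨_, he⟩) (Sum.inl y) (by simp)
  by_contra hvW
  have hwv : w ≠ v := fun h => hvW (h ▸ hwW)
  have key : G.dist y w ≤ G.dist v w := by
    obtain ⟨p, hp⟩ := hG.exists_walk_length_eq_dist v w
    cases p with
    | nil => exact absurd rfl hwv.symm
    | @cons _ z _ hadj q =>
      have hq : G.dist z w ≤ q.length := G.dist_le q
      by_cases hzy : z = y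
      · calc G.dist y w = G.dist z w := by rw [hzy]
          _ ≤ q.length := hq
          _ ≤ G.dist v w := by simp [← hp, SimpleGraph.Walk.length_cons]
      · have hyz : G.Adj y z := hymax z hadj hzy
        calc G.dist y w ≤ G.dist y z + G.dist z w := hG.dist_triangle
          _ ≤ 1 + q.length := by
              have : G.dist y z = 1 := (SimpleGraph.dist_eq_one_iff_adj).2 hyz
              omega
          _ = G.dist v w := by simp [← hp, SimpleGraph.Walk.length_cons, Nat.add_comm]
  apply hwne
  simp only [mixedDist, edgeVertexDist, Sym2.lift_mk]
  exact min_eq_right key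
end

section
/- If G is a connected graph with at least 7 vertices in which every vertex has a maximal neighbor, then G has a vertex of degree at least 5. -/
open SimpleGraph

variable {V : Type*}

private lemma card_four' [DecidableEq V] {a b c d : V} (hab : a ≠ b) (hac : a ≠ c)
    (had : a ≠ d) (hbc : b ≠ c) (hbd : b ≠ d) (hcd : c ≠ d) :
    ({a, b, c, d} : Finset V).card = 4 := by
  rw [Finset.card_insert_of_notMem (by simp [hab, hac, had]),
    Finset.card_insert_of_notMem (by simp [hbc, hbd]),
    Finset.card_insert_of_notMem (by simp [hcd]), Finset.card_singleton]

private lemma card_six' [DecidableEq V] {a b c d e f : V}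
    (h1 : a ≠ b) (h2 : a ≠ c) (h3 : a ≠ d) (h4 : a ≠ e) (h5 : a ≠ f)
    (h6 : b ≠ c) (h7 : b ≠ d) (h8 : b ≠ e) (h9 : b ≠ f)
    (h10 : c ≠ d) (h11 : c ≠ e) (h12 : c ≠ f)
    (h13 : d ≠ e) (h14 : d ≠ f) (h15 : e ≠ f) :
    ({a, b, c, d, e, f} : Finset V).card = 6 := by
  rw [Finset.card_insert_of_notMem (by simp [h1, h2, h3, h4, h5]),
    Finset.card_insert_of_notMem (by simp [h6, h7, h8, h9]),
    card_four' h10 h11 h12 h13 h14 h15]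

/-- A connected graph on at least 7 vertices in which every vertex has a
maximal neighbor contains a vertex of degree at least 5. -/
theorem stmt_2 [Fintype V] (G : SimpleGraph V) [DecidableRel G.Adj]
    (hG : G.Connected) (hn : 7 ≤ Fintype.card V)
    (h : ∀ v : V, ∃ y : V, IsMaxNeighbor G v y) :
    ∃ v : V, 5 ≤ G.degree v := by
  classical
  by_contra hcon
  push_neg at hcon
  have hd : ∀ v, (G.neighborFinset v).card ≤ 4 := by
    intro v
    have := hcon v
    rw [SimpleGraph.card_neighborFinset_eq_degree]
    omega
  have hne : Nonempty V := Fintype.card_pos_iff.mp (by omega)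
  obtain ⟨x, -, hx⟩ := Finset.exists_max_image (Finset.univ : Finset V)
    (fun v => G.degree v) ⟨Classical.arbitrary V, Finset.mem_univ _⟩
  have hx' : ∀ v, G.degree v ≤ G.degree x := fun v => hx v (Finset.mem_univ v)
  obtain ⟨y, hxy, hymax⟩ := h x
  set A : Finset V := insert x (G.neighborFinset x) with hAdef
  have hxA : x ∈ A := Finset.mem_insert_self _ _
  have hcardA : A.card = G.degree x + 1 := by
    rw [hAdef, Finset.card_insert_of_notMem (by simp),
      SimpleGraph.card_neighborFinset_eq_degree]
  have hsub : A ⊆ insert y (G.neighborFinset y) := by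
    intro z hz
    rcases Finset.mem_insert.mp hz with rfl | hz
    · exact Finset.mem_insert.mpr (Or.inr (by
        rw [SimpleGraph.mem_neighborFinset]; exact hxy.symm))
    · rcases eq_or_ne z y with rfl | hzy
      · exact Finset.mem_insert_self _ _
      · refine Finset.mem_insert.mpr (Or.inr ?_)
        rw [SimpleGraph.mem_neighborFinset] at hz ⊢
        exact hymax z hz hzy
  have hAeq : A = insert y (G.neighborFinset y) := by
    apply Finset.eq_of_subset_of_card_le hsub
    rw [Finset.card_insert_of_notMem (by simp), hcardA,
      SimpleGraph.card_neighborFinset_eq_degree]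
    exact Nat.add_le_add_right (hx' y) 1
  have hA1 : ∀ z, z ∈ A ↔ (z = x ∨ G.Adj x z) := by
    intro z; rw [hAdef]; simp [Finset.mem_insert]
  have hA2 : ∀ z, z ∈ A ↔ (z = y ∨ G.Adj y z) := by
    intro z; rw [hAeq]; simp [Finset.mem_insert]
  have hyA : y ∈ A := (hA2 y).mpr (Or.inl rfl)
  have hcardA5 : A.card ≤ 5 := by
    rw [hcardA]
    have := hcon x; omega
  -- Key lemma: boundary structure, first half
  have hB0 : ∀ u w, u ∈ A → w ∉ A → G.Adj u w →
      ∃ z, IsMaxNeighbor G u z ∧ z ≠ x ∧ z ≠ y ∧ z ≠ w ∧ z ∈ A ∧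
        G.neighborFinset z = {x, y, u, w} := by
    intro u w huA hwA huw
    have hwx : w ≠ x := fun e => hwA (e ▸ hxA)
    have hwy : w ≠ y := fun e => hwA (e ▸ hyA)
    have hwnx : ¬ G.Adj x w := fun ha => hwA ((hA1 w).mpr (Or.inr ha))
    have hwny : ¬ G.Adj y w := fun ha => hwA ((hA2 w).mpr (Or.inr ha))
    have hux : u ≠ x := by rintro rfl; exact hwnx huw
    have huy : u ≠ y := by rintro rfl; exact hwny huw
    have huxadj : G.Adj u x := (((hA1 u).mp huA).resolve_left hux).symm
    have huyadj : G.Adj u y := (((hA2 u).mp huA).resolve_left huy).symm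
    obtain ⟨z, huz, hzmax⟩ := h u
    have hzx : z ≠ x := by rintro rfl; exact hwnx (hzmax w huw hwx)
    have hzy : z ≠ y := by rintro rfl; exact hwny (hzmax w huw hwy)
    have hzw : z ≠ w := by
      rintro rfl; exact hwnx (hzmax x huxadj (Ne.symm hwx)).symm
    have hzxadj : G.Adj z x := hzmax x huxadj (Ne.symm hzx)
    have hzyadj : G.Adj z y := hzmax y huyadj (Ne.symm hzy)
    have hzwadj : G.Adj z w := hzmax w huw (Ne.symm hzw)
    have hzA : z ∈ A := (hA1 z).mpr (Or.inr hzxadj.symm)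
    have hwu : w ≠ u := (G.ne_of_adj huw).symm
    have hsub4 : ({x, y, u, w} : Finset V) ⊆ G.neighborFinset z := by
      intro s hs
      simp only [Finset.mem_insert, Finset.mem_singleton] at hs
      rw [SimpleGraph.mem_neighborFinset]
      rcases hs with rfl | rfl | rfl | rfl
      · exact hzxadj
      · exact hzyadj
      · exact huz.symm
      · exact hzwadj
    have hNz : G.neighborFinset z = {x, y, u, w} := by
      refine (Finset.eq_of_subset_of_card_le hsub4 ?_).symm
      rw [card_four' (G.ne_of_adj hxy) (Ne.symm hux) (Ne.symm hwx)
        (Ne.symm huy) (Ne.symm hwy) (Ne.symm hwu)]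
      exact hd z
    exact ⟨z, ⟨huz, hzmax⟩, hzx, hzy, hzw, hzA, hNz⟩
  -- Full boundary lemma
  have hB : ∀ u w, u ∈ A → w ∉ A → G.Adj u w →
      ∃ z, z ∈ A ∧ z ≠ x ∧ z ≠ y ∧
        G.neighborFinset u = {x, y, z, w} ∧ G.neighborFinset z = {x, y, u, w} ∧
        G.neighborFinset w = {u, z} := by
    intro u w huA hwA huw
    obtain ⟨z, hmz, hzx, hzy, hzw, hzA, hNz⟩ := hB0 u w huA hwA huw
    have hwnx : ¬ G.Adj x w := fun ha => hwA ((hA1 w).mpr (Or.inr ha))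
    have hwny : ¬ G.Adj y w := fun ha => hwA ((hA2 w).mpr (Or.inr ha))
    have hzwadj : G.Adj z w := by
      have : w ∈ G.neighborFinset z := by rw [hNz]; simp
      rwa [SimpleGraph.mem_neighborFinset] at this
    obtain ⟨z', hmz', hz'x, hz'y, hz'w, hz'A, hNz'⟩ := hB0 z w hzA hwA hzwadj
    have hz'u : z' = u := by
      have hmem : z' ∈ G.neighborFinset z := by
        rw [SimpleGraph.mem_neighborFinset]; exact hmz'.1
      rw [hNz] at hmem
      simp only [Finset.mem_insert, Finset.mem_singleton] at hmem
      tauto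
    subst hz'u
    have hNu : G.neighborFinset z' = {x, y, z, w} := hNz'
    -- now compute the neighborhood of w
    obtain ⟨t, hwt, htmax⟩ := h w
    have ht_or : t = z' ∨ t = z := by
      by_contra hc
      push_neg at hc
      have htu : G.Adj t z' := htmax z' huw.symm (fun e => hc.1 e.symm)
      have : t ∈ G.neighborFinset z' := by
        rw [SimpleGraph.mem_neighborFinset]; exact htu.symm
      rw [hNu] at this
      simp only [Finset.mem_insert, Finset.mem_singleton] at this
      rcases this with rfl | rfl | rfl | rfl
      · exact hwnx hwt.symm
      · exact hwny hwt.symm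
      · exact hc.2 rfl
      · exact (G.irrefl hwt)
    have hNw : G.neighborFinset w = {z', z} := by
      apply Finset.Subset.antisymm
      · intro s hs
        rw [SimpleGraph.mem_neighborFinset] at hs
        simp only [Finset.mem_insert, Finset.mem_singleton]
        rcases eq_or_ne s t with rfl | hst
        · rcases ht_or with rfl | rfl
          · exact Or.inl rfl
          · exact Or.inr rfl
        · have hts : G.Adj t s := htmax s hs hst
          rcases ht_or with rfl | rfl
          · have : s ∈ G.neighborFinset t := by
              rw [SimpleGraph.mem_neighborFinset]; exact hts
            rw [hNu] at this
            simp only [Finset.mem_insert, Finset.mem_singleton] at this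
            rcases this with rfl | rfl | rfl | rfl
            · exact absurd hs.symm hwnx
            · exact absurd hs.symm hwny
            · exact Or.inr rfl
            · exact absurd hs (G.irrefl)
          · have : s ∈ G.neighborFinset t := by
              rw [SimpleGraph.mem_neighborFinset]; exact hts
            rw [hNz] at this
            simp only [Finset.mem_insert, Finset.mem_singleton] at this
            rcases this with rfl | rfl | rfl | rfl
            · exact absurd hs.symm hwnx
            · exact absurd hs.symm hwny
            · exact Or.inl rfl
            · exact absurd hs (G.irrefl)
      · intro s hs
        simp only [Finset.mem_insert, Finset.mem_singleton] at hs
        rw [SimpleGraph.mem_neighborFinset]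
        rcases hs with rfl | rfl
        · exact huw.symm
        · exact hzwadj.symm
    exact ⟨z, hzA, hzx, hzy, hNu, hNz, hNw⟩
  -- the set of outside vertices
  set Wout : Finset V :=
    Finset.univ.filter (fun w => w ∉ A ∧ ∃ u ∈ A, G.Adj u w) with hWdef
  have hWcard : Wout.card ≤ 1 := by
    rw [Finset.card_le_one]
    intro w1 h1 w2 h2
    rw [hWdef, Finset.mem_filter] at h1 h2
    obtain ⟨-, hw1A, u1, hu1A, hu1w⟩ := h1
    obtain ⟨-, hw2A, u2, hu2A, hu2w⟩ := h2
    by_contra hne12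
    obtain ⟨z1, hz1A, hz1x, hz1y, hNu1, hNz1, -⟩ := hB u1 w1 hu1A hw1A hu1w
    obtain ⟨z2, hz2A, hz2x, hz2y, hNu2, hNz2, -⟩ := hB u2 w2 hu2A hw2A hu2w
    have hu1x : u1 ≠ x := by rintro rfl; exact hw1A ((hA1 w1).mpr (Or.inr hu1w))
    have hu1y : u1 ≠ y := by rintro rfl; exact hw1A ((hA2 w1).mpr (Or.inr hu1w))
    have hu2x : u2 ≠ x := by rintro rfl; exact hw2A ((hA1 w2).mpr (Or.inr hu2w))
    have hu2y : u2 ≠ y := by rintro rfl; exact hw2A ((hA2 w2).mpr (Or.inr hu2w))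
    have hz1u1 : z1 ≠ u1 := by
      have : u1 ∈ G.neighborFinset z1 := by rw [hNz1]; simp
      rw [SimpleGraph.mem_neighborFinset] at this
      exact G.ne_of_adj this
    have hz2u2 : z2 ≠ u2 := by
      have : u2 ∈ G.neighborFinset z2 := by rw [hNz2]; simp
      rw [SimpleGraph.mem_neighborFinset] at this
      exact G.ne_of_adj this
    have hw2u1 : w2 ∈ G.neighborFinset u2 := by
      rw [SimpleGraph.mem_neighborFinset]; exact hu2w
    have hu2u1 : u2 ≠ u1 := by
      intro e
      rw [e, hNu1] at hw2u1
      simp only [Finset.mem_insert, Finset.mem_singleton] at hw2u1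
      rcases hw2u1 with rfl | rfl | rfl | rfl
      · exact hw2A hxA
      · exact hw2A hyA
      · exact hw2A hz1A
      · exact hne12 rfl
    have hu2z1 : u2 ≠ z1 := by
      intro e
      rw [e, hNz1] at hw2u1
      simp only [Finset.mem_insert, Finset.mem_singleton] at hw2u1
      rcases hw2u1 with rfl | rfl | rfl | rfl
      · exact hw2A hxA
      · exact hw2A hyA
      · exact hw2A hu1A
      · exact hne12 rfl
    have hw1z2 : w1 ∈ G.neighborFinset z1 := by rw [hNz1]; simp
    have hz2u1 : z2 ≠ u1 := by
      intro e
      have : w1 ∈ G.neighborFinset u1 := by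
        rw [SimpleGraph.mem_neighborFinset]; exact hu1w
      rw [← e, hNz2] at this
      simp only [Finset.mem_insert, Finset.mem_singleton] at this
      rcases this with rfl | rfl | rfl | rfl
      · exact hw1A hxA
      · exact hw1A hyA
      · exact hw1A hu2A
      · exact hne12 rfl
    have hz2z1 : z2 ≠ z1 := by
      intro e
      rw [← e, hNz2] at hw1z2
      simp only [Finset.mem_insert, Finset.mem_singleton] at hw1z2
      rcases hw1z2 with rfl | rfl | rfl | rfl
      · exact hw1A hxA
      · exact hw1A hyA
      · exact hw1A hu2A
      · exact hne12 rfl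
    have hT : ({x, y, u1, z1, u2, z2} : Finset V) ⊆ A := by
      intro s hs
      simp only [Finset.mem_insert, Finset.mem_singleton] at hs
      rcases hs with rfl | rfl | rfl | rfl | rfl | rfl
      · exact hxA
      · exact hyA
      · exact hu1A
      · exact hz1A
      · exact hu2A
      · exact hz2A
    have hTcard : ({x, y, u1, z1, u2, z2} : Finset V).card = 6 :=
      card_six' (G.ne_of_adj hxy) (Ne.symm hu1x) (Ne.symm hz1x) (Ne.symm hu2x)
        (Ne.symm hz2x) (Ne.symm hu1y) (Ne.symm hz1y) (Ne.symm hu2y)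
        (Ne.symm hz2y) (Ne.symm hz1u1) (Ne.symm hu2u1) (Ne.symm hz2u1)
        (Ne.symm hu2z1) (Ne.symm hz2z1) (Ne.symm hz2u2)
    have := Finset.card_le_card hT
    rw [hTcard] at this
    omega
  -- closure of A ∪ Wout under adjacency
  have hclosed : ∀ v ∈ A ∪ Wout, ∀ s, G.Adj v s → s ∈ A ∪ Wout := by
    intro v hv s hvs
    rcases Finset.mem_union.mp hv with hvA | hvW
    · by_cases hsA : s ∈ A
      · exact Finset.mem_union_left _ hsA
      · refine Finset.mem_union_right _ ?_
        rw [hWdef, Finset.mem_filter]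
        exact ⟨Finset.mem_univ _, hsA, v, hvA, hvs⟩
    · rw [hWdef, Finset.mem_filter] at hvW
      obtain ⟨-, hvA, u, huA, huv⟩ := hvW
      obtain ⟨z, hzA, -, -, hNu, -, hNw⟩ := hB u v huA hvA huv
      have : s ∈ G.neighborFinset v := by
        rw [SimpleGraph.mem_neighborFinset]; exact hvs
      rw [hNw] at this
      simp only [Finset.mem_insert, Finset.mem_singleton] at this
      rcases this with rfl | rfl
      · exact Finset.mem_union_left _ huA
      · exact Finset.mem_union_left _ hzA
  have hwalk : ∀ (b a : V), G.Walk a b → a ∈ A ∪ Wout → b ∈ A ∪ Wout := by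
    intro b a p
    induction p with
    | nil => exact id
    | cons hadj q ih => exact fun ha => ih (hclosed _ ha _ hadj)
  have hall : ∀ v, v ∈ A ∪ Wout := by
    intro v
    obtain ⟨p⟩ := hG.preconnected x v
    exact hwalk v x p (Finset.mem_union_left _ hxA)
  have hle : Fintype.card V ≤ 6 := by
    have h1 : (Finset.univ : Finset V) ⊆ A ∪ Wout := fun v _ => hall v
    have h2 := Finset.card_le_card h1
    have h3 := Finset.card_union_le A Wout
    rw [Finset.card_univ] at h2
    omega
  omega
end

section
/- If G is a connected graph with maximum degree at most 4 and at least 7 vertices, then mdim(G) ≤ |V(G)| − 1. -/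
open SimpleGraph

variable {V : Type*}

/-!
If a vertex `u` has no maximal neighbour, then `V ∖ {u}` is mixed resolving: two distinct
vertices or edges are separated by some vertex `w ≠ u` lying in (at distance `0` from) exactly
one of them, except for a vertex `v` against the edge `uv`; these are separated by a neighbour of
`u` not adjacent to `v`, which exists because `v` is not a maximal neighbour of `u`.

Such a `u` exists. Otherwise every `x` has a neighbour `y` with `N[x] ⊆ N[y]`. Starting from a
vertex `u` of maximum degree, `N[u]` is either closed under taking closed neighbourhoods or some
`w ∈ N[u]` has a neighbour `s ∉ N[u]`; then the maximal neighbours of `u` and `w` force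
`|N[u] ∩ N[w]| ≥ 4`, and `N[u] ∪ N[w]`, of size at most `6`, is closed. By connectivity this
closed set is all of `V`, contradicting `|V| ≥ 7`.
-/

open Finset

theorem Sym2.mem_of_forall_ne_mem_imp {α : Type*} {u : α} {e e' : Sym2 α} (he' : ¬e'.IsDiag)
    (h : ∀ x ≠ u, x ∈ e' → x ∈ e) (hu : u ∈ e) : u ∈ e' := by
  induction e' with
  | h c d =>
    by_contra hu'
    have hcu : c ≠ u := fun hc => hu' (hc ▸ Sym2.mem_mk_left c d)
    have hdu : d ≠ u := fun hd => hu' (hd ▸ Sym2.mem_mk_right c d)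
    have hcd : c ≠ d := he'
    have he : e = s(c, d) := (Sym2.mem_and_mem_iff hcd).1
      ⟨h c hcu (Sym2.mem_mk_left c d), h d hdu (Sym2.mem_mk_right c d)⟩
    exact hu' (he ▸ hu)

theorem Sym2.eq_of_forall_ne_mem_iff {α : Type*} {u : α} {e e' : Sym2 α} (he : ¬e.IsDiag)
    (he' : ¬e'.IsDiag) (h : ∀ x ≠ u, x ∈ e ↔ x ∈ e') : e = e' := by
  refine Sym2.ext fun x => ?_
  rcases eq_or_ne x u with rfl | hx
  · exact ⟨Sym2.mem_of_forall_ne_mem_imp he' fun y hy => (h y hy).2,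
      Sym2.mem_of_forall_ne_mem_imp he fun y hy => (h y hy).1⟩
  · exact h x hx

section Resolving

variable {G : SimpleGraph V} (hG : G.Connected)
include hG

theorem edgeVertexDist_eq_zero_iff {w : V} {e : Sym2 V} : edgeVertexDist G w e = 0 ↔ w ∈ e := by
  induction e with
  | h a b =>
    simp only [edgeVertexDist, Sym2.lift_mk, Nat.min_eq_zero_iff, hG.dist_eq_zero_iff,
      Sym2.mem_iff]
    tauto

theorem exists_ne_dist_ne_dist (u : V) {v v' : V} (hvv' : v ≠ v') :
    ∃ w ≠ u, G.dist v w ≠ G.dist v' w := by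
  rcases eq_or_ne v u with rfl | hvu
  · exact ⟨v', hvv'.symm, by simpa using (hG.pos_dist_of_ne hvv').ne'⟩
  · exact ⟨v, hvu, by simpa using (hG.pos_dist_of_ne hvv'.symm).ne⟩

theorem exists_ne_edgeVertexDist_ne (u : V) {e e' : Sym2 V} (he : e ∈ G.edgeSet)
    (he' : e' ∈ G.edgeSet) (hee' : e ≠ e') :
    ∃ w ≠ u, edgeVertexDist G w e ≠ edgeVertexDist G w e' := by
  by_contra! h
  refine hee' (Sym2.eq_of_forall_ne_mem_iff (G.not_isDiag_of_mem_edgeSet he)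
    (G.not_isDiag_of_mem_edgeSet he') (u := u) fun x hx => ?_)
  rw [← edgeVertexDist_eq_zero_iff hG, ← edgeVertexDist_eq_zero_iff hG, h x hx]

theorem exists_ne_dist_ne_edgeVertexDist_of_not_isMaxNeighbor {u v : V} (huv : G.Adj u v)
    (h : ¬IsMaxNeighbor G u v) : ∃ z ≠ u, G.dist v z ≠ edgeVertexDist G z s(u, v) := by
  obtain ⟨z, huz, hzv, hvz⟩ : ∃ z, G.Adj u z ∧ z ≠ v ∧ ¬G.Adj v z := by
    simpa [IsMaxNeighbor, huv] using h
  refine ⟨z, huz.ne', ?_⟩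
  have hvz₀ : G.dist v z ≠ 0 := hG.dist_eq_zero_iff.not.2 hzv.symm
  have hvz₁ : G.dist v z ≠ 1 := dist_eq_one_iff_adj.not.2 hvz
  have huz₁ : G.dist u z = 1 := dist_eq_one_iff_adj.2 huz
  simp only [edgeVertexDist, Sym2.lift_mk]
  omega

theorem exists_ne_dist_ne_edgeVertexDist {u : V} (hu : ∀ v, ¬IsMaxNeighbor G u v) (v : V)
    {e : Sym2 V} (he : e ∈ G.edgeSet) : ∃ w ≠ u, G.dist v w ≠ edgeVertexDist G w e := by
  by_cases h : ∃ w ∈ e, w ≠ u ∧ w ≠ v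
  · obtain ⟨w, hwe, hwu, hwv⟩ := h
    refine ⟨w, hwu, ?_⟩
    rw [(edgeVertexDist_eq_zero_iff hG).2 hwe]
    exact (hG.pos_dist_of_ne hwv.symm).ne'
  · induction e with
    | h a b =>
      push Not at h
      have ha : a ≠ u → a = v := h a (Sym2.mem_mk_left a b)
      have hb : b ≠ u → b = v := h b (Sym2.mem_mk_right a b)
      have hab : G.Adj a b := he
      rcases eq_or_ne a u with rfl | hau
      · obtain rfl := hb hab.ne'
        exact exists_ne_dist_ne_edgeVertexDist_of_not_isMaxNeighbor hG hab (hu b)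
      · obtain rfl := ha hau
        obtain rfl : b = u := by_contra fun hbu => hab.ne (hb hbu).symm
        rw [Sym2.eq_swap]
        exact exists_ne_dist_ne_edgeVertexDist_of_not_isMaxNeighbor hG hab.symm (hu a)

theorem isMixedResolving_erase [Fintype V] [DecidableEq V] {u : V}
    (hu : ∀ v, ¬IsMaxNeighbor G u v) : IsMixedResolving G ↑(univ.erase u) := by
  suffices ∀ x y : V ⊕ G.edgeSet, x ≠ y → ∃ w ≠ u, mixedDist G w x ≠ mixedDist G w y by
    intro x y hxy
    obtain ⟨w, hwu, hw⟩ := this x y hxy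
    exact ⟨w, by simpa using hwu, hw⟩
  rintro (v | ⟨e, he⟩) (v' | ⟨e', he'⟩) hxy
  · exact exists_ne_dist_ne_dist hG u fun h => hxy (h ▸ rfl)
  · exact exists_ne_dist_ne_edgeVertexDist hG hu v he'
  · obtain ⟨w, hwu, hw⟩ := exists_ne_dist_ne_edgeVertexDist hG hu v' he
    exact ⟨w, hwu, hw.symm⟩
  · exact exists_ne_edgeVertexDist_ne hG u he he' fun h => hxy (by subst h; rfl)

end Resolving

theorem mdim_le_card [Fintype V] {G : SimpleGraph V} {W : Finset V}
    (hW : IsMixedResolving G ↑W) : mdim G ≤ #W :=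
  Nat.sInf_le ⟨W, rfl, hW⟩

namespace SimpleGraph

variable {G : SimpleGraph V} [Fintype V] [DecidableEq V] [DecidableRel G.Adj]

variable (G) in
def closedNeighborFinset (x : V) : Finset V := insert x (G.neighborFinset x)

local notation "N[" x "]" => closedNeighborFinset G x

theorem mem_closedNeighborFinset {x y : V} : y ∈ N[x] ↔ y = x ∨ G.Adj x y := by
  simp [closedNeighborFinset]

theorem self_mem_closedNeighborFinset (x : V) : x ∈ N[x] := mem_insert_self _ _

theorem mem_closedNeighborFinset_comm {x y : V} : y ∈ N[x] ↔ x ∈ N[y] := by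
  simp only [mem_closedNeighborFinset, eq_comm, G.adj_comm]

theorem card_closedNeighborFinset (x : V) : #N[x] = G.degree x + 1 := by
  rw [closedNeighborFinset, card_insert_of_notMem (by simp), card_neighborFinset_eq_degree]

theorem Connected.eq_univ_of_closedNeighborFinset_subset (hG : G.Connected) {A : Finset V}
    {a : V} (ha : a ∈ A) (hA : ∀ x ∈ A, N[x] ⊆ A) : A = univ := by
  have hwalk : ∀ {x y : V}, G.Walk x y → x ∈ A → y ∈ A := by
    intro x y p
    induction p with
    | nil => exact id
    | cons hxy _ ih => exact fun hx => ih (hA _ hx (mem_closedNeighborFinset.2 (Or.inr hxy)))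
  exact eq_univ_of_forall fun y => hwalk (hG a y).some ha

end SimpleGraph

section MaxNeighbor

variable {G : SimpleGraph V} [Fintype V] [DecidableEq V] [DecidableRel G.Adj]

local notation "N[" x "]" => closedNeighborFinset G x

theorem IsMaxNeighbor.closedNeighborFinset_subset {x y : V} (h : IsMaxNeighbor G x y) :
    N[x] ⊆ N[y] := by
  intro z hz
  rw [mem_closedNeighborFinset] at hz ⊢
  rcases hz with rfl | hxz
  · exact Or.inr h.1.symm
  · by_cases hzy : z = y
    · exact Or.inl hzy
    · exact Or.inr (h.2 z hxz hzy)

theorem IsMaxNeighbor.closedNeighborFinset_eq {x y : V} (h : IsMaxNeighbor G x y)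
    (hdeg : G.degree y ≤ G.degree x) : N[x] = N[y] :=
  eq_of_subset_of_card_le h.closedNeighborFinset_subset
    (by simpa [card_closedNeighborFinset] using hdeg)

/-- The maximal neighbour of `x ∈ N[c] \ K` lies in `N[c]` and differs from `x`, hence lies
in `K`. -/
theorem closedNeighborFinset_subset_of_card_le_succ (hmax : ∀ x, ∃ y, IsMaxNeighbor G x y)
    {K A : Finset V} (hK : ∀ y ∈ K, N[y] ⊆ A) {c : V} (hKc : K ⊆ N[c])
    (hcard : #N[c] ≤ #K + 1) {x : V} (hx : x ∈ N[c]) : N[x] ⊆ A := by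
  by_cases hxK : x ∈ K
  · exact hK x hxK
  obtain ⟨y, hxy⟩ := hmax x
  have hyc : y ∈ N[c] := mem_closedNeighborFinset_comm.1
    (hxy.closedNeighborFinset_subset (mem_closedNeighborFinset_comm.1 hx))
  have hyK : y ∈ K := by
    by_contra hyK
    have hsub : {x, y} ⊆ N[c] \ K := by
      simp [insert_subset_iff, hx, hxK, hyc, hyK]
    have := card_le_card hsub
    rw [card_pair hxy.1.ne, card_sdiff_of_subset hKc] at this
    omega
  exact hxy.closedNeighborFinset_subset.trans (hK y hyK)

theorem exists_card_eq_four_subset_inter_closedNeighborFinset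
    (hΔ : ∀ v, G.degree v ≤ 4) (hmax : ∀ x, ∃ y, IsMaxNeighbor G x y) {u v w s : V}
    (huv : IsMaxNeighbor G u v) (hNv : N[u] = N[v]) (hw : w ∈ N[u]) (hsw : s ∈ N[w])
    (hsu : s ∉ N[u]) :
    ∃ K : Finset V, #K = 4 ∧ K ⊆ N[u] ∩ N[w] ∧ ∀ y ∈ K, N[y] ⊆ N[u] ∪ N[w] := by
  obtain ⟨t, hwt⟩ := hmax w
  have hwt' := hwt.closedNeighborFinset_subset
  have hwu : w ≠ u := by rintro rfl; exact hsu hsw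
  have hwv : w ≠ v := by rintro rfl; exact hsu (hNv ▸ hsw)
  have htu : t ≠ u := by rintro rfl; exact hsu (hwt' hsw)
  have htv : t ≠ v := by rintro rfl; exact hsu (hNv ▸ hwt' hsw)
  set K : Finset V := {u, v, w, t} with hK
  have hKcard : #K = 4 := by
    rw [hK, card_insert_of_notMem, card_insert_of_notMem, card_pair hwt.1.ne]
    · simp [hwv.symm, htv.symm]
    · simp [huv.1.ne, hwu.symm, htu.symm]
  have hKu : K ⊆ N[u] := by
    simp only [hK, insert_subset_iff, singleton_subset_iff, self_mem_closedNeighborFinset, hw,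
      true_and]
    exact ⟨mem_closedNeighborFinset.2 (Or.inr huv.1), mem_closedNeighborFinset_comm.1
      (hwt' (mem_closedNeighborFinset_comm.1 hw))⟩
  have hKw : K ⊆ N[w] := by
    simp only [hK, insert_subset_iff, singleton_subset_iff, self_mem_closedNeighborFinset,
      true_and]
    exact ⟨mem_closedNeighborFinset_comm.1 hw, mem_closedNeighborFinset_comm.1 (hNv ▸ hw),
      mem_closedNeighborFinset.2 (Or.inr hwt.1)⟩
  have hNt : N[w] = N[t] := by
    refine eq_of_subset_of_card_le hwt' ?_
    calc #N[t] ≤ 5 := by rw [card_closedNeighborFinset]; linarith [hΔ t]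
      _ = #(insert s K) := by rw [card_insert_of_notMem fun h => hsu (hKu h), hKcard]
      _ ≤ #N[w] := card_le_card (insert_subset hsw hKw)
  refine ⟨K, hKcard, subset_inter hKu hKw, ?_⟩
  simp only [hK, mem_insert, mem_singleton, forall_eq_or_imp, forall_eq, ← hNv, ← hNt]
  exact ⟨subset_union_left, subset_union_left, subset_union_right, subset_union_right⟩

theorem card_le_six_of_forall_exists_isMaxNeighbor (hG : G.Connected)
    (hΔ : ∀ v, G.degree v ≤ 4) (hmax : ∀ x, ∃ y, IsMaxNeighbor G x y) :
    Fintype.card V ≤ 6 := by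
  have : Nonempty V := hG.nonempty
  have hcardN : ∀ x, #N[x] ≤ 5 := fun x => by rw [card_closedNeighborFinset]; linarith [hΔ x]
  obtain ⟨u, hu⟩ := G.exists_maximal_degree_vertex
  obtain ⟨v, huv⟩ := hmax u
  have hNv : N[u] = N[v] := huv.closedNeighborFinset_eq (hu ▸ G.degree_le_maxDegree v)
  by_cases hclosed : ∀ x ∈ N[u], N[x] ⊆ N[u]
  · rw [← card_univ, ← hG.eq_univ_of_closedNeighborFinset_subset
      (self_mem_closedNeighborFinset u) hclosed]
    linarith [hcardN u]
  push Not at hclosed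
  obtain ⟨w, hw, hNw⟩ := hclosed
  obtain ⟨s, hsw, hsu⟩ := not_subset.1 hNw
  obtain ⟨K, hKcard, hKuw, hKA⟩ :=
    exists_card_eq_four_subset_inter_closedNeighborFinset hΔ hmax huv hNv hw hsw hsu
  have hA : ∀ x ∈ N[u] ∪ N[w], N[x] ⊆ N[u] ∪ N[w] := by
    intro x hx
    rcases mem_union.1 hx with hx | hx
    · exact closedNeighborFinset_subset_of_card_le_succ hmax hKA
        (hKuw.trans inter_subset_left) (by rw [hKcard]; exact hcardN u) hx
    · exact closedNeighborFinset_subset_of_card_le_succ hmax hKA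
        (hKuw.trans inter_subset_right) (by rw [hKcard]; exact hcardN w) hx
  rw [← card_univ, ← hG.eq_univ_of_closedNeighborFinset_subset
    (mem_union_left _ (self_mem_closedNeighborFinset u)) hA]
  have := card_union_add_card_inter N[u] N[w]
  have := card_le_card hKuw
  linarith [hcardN u, hcardN w]

theorem exists_forall_not_isMaxNeighbor (hG : G.Connected) (hΔ : ∀ v, G.degree v ≤ 4)
    (hn : 7 ≤ Fintype.card V) : ∃ u, ∀ v, ¬IsMaxNeighbor G u v := by
  by_contra! hmax
  linarith [card_le_six_of_forall_exists_isMaxNeighbor hG hΔ hmax]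

end MaxNeighbor

/-- A connected chemical graph (maximum degree at most 4) on at least 7
vertices satisfies `mdim G ≤ n - 1`. -/
theorem stmt_3 [Fintype V] (G : SimpleGraph V) [DecidableRel G.Adj]
    (hG : G.Connected) (hΔ : ∀ v : V, G.degree v ≤ 4)
    (hn : 7 ≤ Fintype.card V) :
    mdim G ≤ Fintype.card V - 1 := by
  classical
  obtain ⟨u, hu⟩ := exists_forall_not_isMaxNeighbor hG hΔ hn
  calc mdim G ≤ #(univ.erase u) := mdim_le_card (isMixedResolving_erase hG hu)
    _ = Fintype.card V - 1 := by rw [card_erase_of_mem (mem_univ u), card_univ]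
end

section
/- In the strong product G ⊠ K₂ of any graph G with K₂, every vertex has a maximal neighbor; consequently, if G is connected, then mdim(G ⊠ K₂) = 2·|V(G)|. -/
/-!
If `y` is a maximal neighbor of `x`, every shortest path from `x` to a vertex `w ≠ x` can be
rerouted through `y`, so `d(y, w) ≤ d(x, w)` and no vertex other than `x` distinguishes the
vertex `y` from the edge `xy`: every mixed resolving set contains `x`. Conversely, in a connected
graph a mixed element is determined by the set of vertices at distance zero from it, so the whole
vertex set is mixed resolving. Finally, a maximal neighbor `h'` of `h` in `H` makes `(g, h')` a
maximal neighbor of `(g, h)` in `G ⊠ H`, and the two vertices of `K₂` are maximal neighbors of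
each other.
-/

open SimpleGraph

variable {V : Type*}

/-- The strong product of two simple graphs. -/
def strongProd {α β : Type*} (G : SimpleGraph α) (H : SimpleGraph β) :
    SimpleGraph (α × β) where
  Adj x y := (x.1 = y.1 ∧ H.Adj x.2 y.2) ∨ (x.2 = y.2 ∧ G.Adj x.1 y.1) ∨
    (G.Adj x.1 y.1 ∧ H.Adj x.2 y.2)
  symm := by
    constructor
    rintro ⟨a, b⟩ ⟨c, d⟩ (⟨h1, h2⟩ | ⟨h1, h2⟩ | ⟨h1, h2⟩)
    · exact Or.inl ⟨h1.symm, h2.symm⟩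
    · exact Or.inr (Or.inl ⟨h1.symm, h2.symm⟩)
    · exact Or.inr (Or.inr ⟨h1.symm, h2.symm⟩)
  loopless := by
    constructor
    rintro ⟨a, b⟩ (⟨h1, h2⟩ | ⟨h1, h2⟩ | ⟨h1, h2⟩)
    · exact H.loopless.irrefl _ h2
    · exact G.loopless.irrefl _ h2
    · exact G.loopless.irrefl _ h1

namespace SimpleGraph

variable {α β : Type*} {G : SimpleGraph α}

lemma isMaxNeighbor_top {x y : α} (h : x ≠ y) : IsMaxNeighbor (⊤ : SimpleGraph α) x y :=
  ⟨h, fun _ _ hzy => hzy.symm⟩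

lemma IsMaxNeighbor.strongProd_right {H : SimpleGraph β} {h h' : β}
    (hmax : IsMaxNeighbor H h h') (g : α) :
    IsMaxNeighbor (strongProd G H) (g, h) (g, h') := by
  refine ⟨Or.inl ⟨rfl, hmax.1⟩, ?_⟩
  rintro ⟨g₂, h₂⟩ (⟨rfl, hh₂⟩ | ⟨rfl, hg₂⟩ | ⟨hg₂, hh₂⟩) hne
  · exact Or.inl ⟨rfl, hmax.2 h₂ hh₂ fun e => hne (by rw [e])⟩
  · exact Or.inr (Or.inr ⟨hg₂, hmax.1.symm⟩)
  · by_cases e : h₂ = h'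
    · exact Or.inr (Or.inl ⟨e.symm, hg₂⟩)
    · exact Or.inr (Or.inr ⟨hg₂, hmax.2 h₂ hh₂ e⟩)

lemma boxProd_le_strongProd (H : SimpleGraph β) : G.boxProd H ≤ strongProd G H := by
  rintro ⟨g₁, h₁⟩ ⟨g₂, h₂⟩ (⟨hg, rfl⟩ | ⟨hh, rfl⟩)
  · exact Or.inr (Or.inl ⟨rfl, hg⟩)
  · exact Or.inl ⟨rfl, hh⟩

lemma Connected.strongProd {H : SimpleGraph β} (hG : G.Connected) (hH : H.Connected) :
    (strongProd G H).Connected :=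
  (hG.boxProd hH).mono (boxProd_le_strongProd H)

/-- A shortest walk from `x` to `w` continues either at `y` or at a neighbor of `y`. -/
lemma IsMaxNeighbor.dist_le_dist {x y w : α} (hmax : IsMaxNeighbor G x y) (hw : w ≠ x) :
    G.dist y w ≤ G.dist x w := by
  by_cases hxw : G.Reachable x w
  · obtain ⟨p, hp⟩ := hxw.exists_walk_length_eq_dist
    cases p with
    | nil => exact absurd rfl hw
    | @cons _ z _ hxz q =>
      rw [Walk.length_cons] at hp
      by_cases hzy : z = y
      · subst hzy
        have := dist_le q
        omega
      · have := dist_le (Walk.cons (hmax.2 z hxz hzy) q)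
        rw [Walk.length_cons] at this
        omega
  · have hyw : ¬ G.Reachable y w := fun hyw => hxw (hmax.1.reachable.trans hyw)
    simp [dist_eq_zero_of_not_reachable hyw]

def mixedSupport (G : SimpleGraph α) : α ⊕ G.edgeSet → Set α
  | Sum.inl v => {v}
  | Sum.inr e => {w | w ∈ e.val}

lemma setOf_mem_edge_ne_singleton (e : G.edgeSet) (u : α) : {w | w ∈ e.val} ≠ {u} := by
  obtain ⟨e, he⟩ := e
  induction e using Sym2.ind with
  | _ a b =>
    intro h
    have ha : a ∈ ({u} : Set α) := h ▸ Sym2.mem_mk_left a b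
    have hb : b ∈ ({u} : Set α) := h ▸ Sym2.mem_mk_right a b
    exact (G.mem_edgeSet.mp he).ne (ha.trans hb.symm)

lemma mixedSupport_injective : Function.Injective (mixedSupport G) := by
  rintro (u | e) (v | f) h
  · simpa [mixedSupport] using h
  · exact absurd h.symm (setOf_mem_edge_ne_singleton f u)
  · exact absurd h (setOf_mem_edge_ne_singleton e v)
  · exact congrArg Sum.inr (Subtype.ext (Sym2.ext fun w => Set.ext_iff.mp h w))

lemma Connected.mixedDist_eq_zero_iff (hG : G.Connected) {w : α} {x : α ⊕ G.edgeSet} :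
    mixedDist G w x = 0 ↔ w ∈ mixedSupport G x := by
  rcases x with v | ⟨e, he⟩
  · change G.dist v w = 0 ↔ w = v
    rw [hG.dist_eq_zero_iff, eq_comm]
  · induction e using Sym2.ind with
    | _ a b =>
      change min (G.dist a w) (G.dist b w) = 0 ↔ w ∈ s(a, b)
      rw [Nat.min_eq_zero_iff, hG.dist_eq_zero_iff, hG.dist_eq_zero_iff, Sym2.mem_iff,
        eq_comm (a := a), eq_comm (a := b)]

lemma Connected.isMixedResolving_univ (hG : G.Connected) : IsMixedResolving G Set.univ := by
  intro x y hxy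
  obtain ⟨w, hw⟩ : ∃ w, ¬ (w ∈ mixedSupport G x ↔ w ∈ mixedSupport G y) := by
    by_contra! h
    exact hxy (mixedSupport_injective (Set.ext h))
  refine ⟨w, Set.mem_univ w, fun hdist => hw ?_⟩
  rw [← hG.mixedDist_eq_zero_iff, ← hG.mixedDist_eq_zero_iff, hdist]

lemma IsMixedResolving.mem_of_isMaxNeighbor {W : Set α} (hW : IsMixedResolving G W)
    {x y : α} (hmax : IsMaxNeighbor G x y) : x ∈ W := by
  by_contra hx
  obtain ⟨w, hwW, hwd⟩ :=
    hW (Sum.inl y) (Sum.inr ⟨s(x, y), G.mem_edgeSet.mpr hmax.1⟩) Sum.inl_ne_inr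
  have hle := hmax.dist_le_dist (w := w) (by rintro rfl; exact hx hwW)
  exact hwd (min_eq_right hle).symm

lemma mdim_eq_card [Fintype α] (hG : G.Connected) (hmax : ∀ x, ∃ y, IsMaxNeighbor G x y) :
    mdim G = Fintype.card α := by
  have hres : {n | ∃ W : Finset α, W.card = n ∧ IsMixedResolving G ↑W} = {Fintype.card α} := by
    ext n
    constructor
    · rintro ⟨W, rfl, hW⟩
      have : W = Finset.univ := Finset.eq_univ_iff_forall.mpr fun x =>
        (hmax x).elim fun _ hy => hW.mem_of_isMaxNeighbor hy
      rw [this, Finset.card_univ, Set.mem_singleton_iff]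
    · rintro rfl
      refine ⟨Finset.univ, Finset.card_univ, ?_⟩
      rw [Finset.coe_univ]
      exact hG.isMixedResolving_univ
  rw [mdim, hres, csInf_singleton]

end SimpleGraph

/-- In `G ⊠ K₂` every vertex has a maximal neighbor; consequently, if `G` is
connected, then `mdim (G ⊠ K₂) = 2 * |V(G)|`. -/
theorem stmt_5 [Fintype V] (G : SimpleGraph V) :
    (∀ x : V × Fin 2, ∃ y : V × Fin 2,
        IsMaxNeighbor (strongProd G (⊤ : SimpleGraph (Fin 2))) x y) ∧
    (G.Connected →
      mdim (strongProd G (⊤ : SimpleGraph (Fin 2))) = 2 * Fintype.card V) := by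
  have hmax : ∀ x : V × Fin 2, ∃ y,
      IsMaxNeighbor (strongProd G (⊤ : SimpleGraph (Fin 2))) x y := fun ⟨v, i⟩ =>
    ⟨(v, i + 1), (isMaxNeighbor_top (by fin_cases i <;> decide)).strongProd_right v⟩
  refine ⟨hmax, fun hG => ?_⟩
  rw [mdim_eq_card (hG.strongProd connected_top) hmax, Fintype.card_prod, Fintype.card_fin,
    mul_comm]
end

section
/- Let G and H be disjoint graphs in which every vertex has a maximal neighbor, and let e_G = gg' ∈ E(G) and e_H = hh' ∈ E(H) be edges such that g and g' are maximal neighbors of each other in G, and h and h' are maximal neighbors of each other in H. Then in the graph A obtained from the disjoint union of G and H by identifying g with h and g' with h' (so e_G and e_H become one edge), every vertex has a maximal neighbor. -/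
open SimpleGraph

variable {V : Type*}

/-- The amalgamation of `G` and `H` obtained by identifying the edge `gg'` of
`G` with the edge `hh'` of `H` (`g` with `h` and `g'` with `h'`). The vertex
set is `α ⊕ {b : β // b ≠ h ∧ b ≠ h'}`, where `Sum.inl g` plays the role of
the identified vertex `g = h` and `Sum.inl g'` of `g' = h'`. -/
def Amalg {α β : Type*} (G : SimpleGraph α) (H : SimpleGraph β)
    (g g' : α) (h h' : β) : SimpleGraph (α ⊕ {b : β // b ≠ h ∧ b ≠ h'}) :=
  SimpleGraph.fromRel fun x y =>
    match x, y with
    | Sum.inl a, Sum.inl a' => G.Adj a a'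
    | Sum.inr b, Sum.inr b' => H.Adj b.val b'.val
    | Sum.inl a, Sum.inr b => (a = g ∧ H.Adj h b.val) ∨ (a = g' ∧ H.Adj h' b.val)
    | Sum.inr _, Sum.inl _ => False

section AuxAmalg
variable {α β : Type*} {G : SimpleGraph α} {H : SimpleGraph β} {g g' : α} {h h' : β}

lemma adj_ll {a a'} : (Amalg G H g g' h h').Adj (Sum.inl a) (Sum.inl a') ↔ G.Adj a a' := by
  simp only [Amalg, fromRel_adj]
  constructor
  · rintro ⟨_, hr | hr⟩; exact hr; exact hr.symm
  · intro hr; exact ⟨by simpa using hr.ne, Or.inl hr⟩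

lemma adj_rr {b b'} : (Amalg G H g g' h h').Adj (Sum.inr b) (Sum.inr b') ↔ H.Adj b.val b'.val := by
  simp only [Amalg, fromRel_adj]
  constructor
  · rintro ⟨_, hr | hr⟩; exact hr; exact hr.symm
  · intro hr; exact ⟨by simpa [Subtype.ext_iff] using hr.ne, Or.inl hr⟩

lemma adj_lr {a b} : (Amalg G H g g' h h').Adj (Sum.inl a) (Sum.inr b) ↔
    (a = g ∧ H.Adj h b.val) ∨ (a = g' ∧ H.Adj h' b.val) := by
  simp only [Amalg, fromRel_adj]
  constructor
  · rintro ⟨_, hr | hr⟩; exact hr; exact hr.elim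
  · intro hr; exact ⟨by simp, Or.inl hr⟩

lemma adj_rl {a b} : (Amalg G H g g' h h').Adj (Sum.inr b) (Sum.inl a) ↔
    (a = g ∧ H.Adj h b.val) ∨ (a = g' ∧ H.Adj h' b.val) :=
  (Amalg G H g g' h h').adj_comm _ _ |>.trans adj_lr
end AuxAmalg

/-- If every vertex of `G` and of `H` has a maximal neighbor, and the edges
`gg'` and `hh'` have endpoints which are maximal neighbors of each other, then
every vertex of the amalgamation has a maximal neighbor. -/
theorem stmt_6 {α β : Type*} (G : SimpleGraph α) (H : SimpleGraph β)
    (g g' : α) (h h' : β)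
    (hGall : ∀ a : α, ∃ y : α, IsMaxNeighbor G a y)
    (hHall : ∀ b : β, ∃ y : β, IsMaxNeighbor H b y)
    (hg : IsMaxNeighbor G g g') (hg' : IsMaxNeighbor G g' g)
    (hh : IsMaxNeighbor H h h') (hh' : IsMaxNeighbor H h' h) :
    ∀ x, ∃ y, IsMaxNeighbor (Amalg G H g g' h h') x y := by
  have hgg' : g ≠ g' := hg.1.ne
  have hhh' : h ≠ h' := hh.1.ne
  rintro (a | b)
  · by_cases ha : a = g
    · subst ha
      refine ⟨Sum.inl g', adj_ll.mpr hg.1, ?_⟩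
      rintro (w | b) hz hne
      · exact adj_ll.mpr (hg.2 w (adj_ll.mp hz) (by simpa using hne))
      · rcases adj_lr.mp hz with ⟨_, hb⟩ | ⟨he, _⟩
        · exact adj_lr.mpr (Or.inr ⟨rfl, hh.2 b.val hb b.prop.2⟩)
        · exact absurd he hgg'
    · by_cases ha' : a = g'
      · subst ha'
        refine ⟨Sum.inl g, adj_ll.mpr hg'.1, ?_⟩
        rintro (w | b) hz hne
        · exact adj_ll.mpr (hg'.2 w (adj_ll.mp hz) (by simpa using hne))
        · rcases adj_lr.mp hz with ⟨he, _⟩ | ⟨_, hb⟩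
          · exact absurd he.symm hgg'
          · exact adj_lr.mpr (Or.inl ⟨rfl, hh'.2 b.val hb b.prop.1⟩)
      · obtain ⟨y, hy⟩ := hGall a
        refine ⟨Sum.inl y, adj_ll.mpr hy.1, ?_⟩
        rintro (w | b) hz hne
        · exact adj_ll.mpr (hy.2 w (adj_ll.mp hz) (by simpa using hne))
        · rcases adj_lr.mp hz with ⟨he, _⟩ | ⟨he, _⟩
          · exact absurd he ha
          · exact absurd he ha'
  · obtain ⟨y, hy⟩ := hHall b.val
    by_cases hyh : y = h
    · subst hyh
      refine ⟨Sum.inl g, adj_rl.mpr (Or.inl ⟨rfl, hy.1.symm⟩), ?_⟩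
      rintro (w | b') hz hne
      · rcases adj_rl.mp hz with ⟨he, _⟩ | ⟨he, _⟩
        · exact absurd (by rw [he]) hne
        · subst he; exact adj_ll.mpr hg.1
      · exact adj_lr.mpr (Or.inl ⟨rfl, hy.2 b'.val (adj_rr.mp hz) b'.prop.1⟩)
    · by_cases hyh' : y = h'
      · subst hyh'
        refine ⟨Sum.inl g', adj_rl.mpr (Or.inr ⟨rfl, hy.1.symm⟩), ?_⟩
        rintro (w | b') hz hne
        · rcases adj_rl.mp hz with ⟨he, _⟩ | ⟨he, _⟩
          · subst he; exact adj_ll.mpr hg.1.symm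
          · exact absurd (by rw [he]) hne
        · exact adj_lr.mpr (Or.inr ⟨rfl, hy.2 b'.val (adj_rr.mp hz) b'.prop.2⟩)
      · refine ⟨Sum.inr ⟨y, hyh, hyh'⟩, adj_rr.mpr hy.1, ?_⟩
        rintro (w | b') hz hne
        · rcases adj_rl.mp hz with ⟨he, hb⟩ | ⟨he, hb⟩
          · subst he
            exact adj_rl.mpr (Or.inl ⟨rfl, (hy.2 h hb.symm (Ne.symm hyh)).symm⟩)
          · subst he
            exact adj_rl.mpr (Or.inr ⟨rfl, (hy.2 h' hb.symm (Ne.symm hyh')).symm⟩)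
        · refine adj_rr.mpr (hy.2 b'.val (adj_rr.mp hz) ?_)
          simpa [Subtype.ext_iff] using hne
end

section
/- If a connected graph G on n ≥ 2 vertices has exactly one universal vertex, then mdim(G) = n − 1. -/
open SimpleGraph

variable {V : Type*}

/-! Let `u` be the universal vertex. Every resolving set must contain each `x ≠ u`: the
vertex `u` and the edge `ux` are at the same distance from every vertex except `x`, since
all distances from `u` are at most `1`. Conversely `V ∖ {u}` resolves: a vertex or an edge
not containing `w` is at positive distance from `w`, which separates almost all pairs; the
only delicate pair is a vertex `a` and the edge `au`, separated by a non-neighbour of `a`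
(at distance `2` from `a` and `1` from `u`), which exists because `a` is not universal. -/

lemma Sym2.exists_mem_notMem_of_ne {α : Type*} {e f : Sym2 α} (he : ¬e.IsDiag) (hef : e ≠ f) :
    ∃ x ∈ e, x ∉ f := by
  induction e using Sym2.ind with
  | _ a b =>
    by_contra! h
    exact hef ((Sym2.mem_and_mem_iff (Sym2.mk_isDiag_iff.not.1 he)).1
      ⟨h a (Sym2.mem_mk_left a b), h b (Sym2.mem_mk_right a b)⟩).symm

namespace SimpleGraph

variable {G : SimpleGraph V}

@[simp]
lemma mixedDist_inl (w a : V) : mixedDist G w (.inl a) = G.dist a w := rfl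

@[simp]
lemma mixedDist_inr (w : V) (e : G.edgeSet) : mixedDist G w (.inr e) = edgeVertexDist G w e := rfl

lemma edgeVertexDist_mk (w a b : V) :
    edgeVertexDist G w s(a, b) = min (G.dist a w) (G.dist b w) := rfl

lemma edgeVertexDist_eq_zero_of_mem {w : V} {e : Sym2 V} (h : w ∈ e) :
    edgeVertexDist G w e = 0 := by
  induction e using Sym2.ind with
  | _ a b => rcases Sym2.mem_iff.1 h with rfl | rfl <;> simp [edgeVertexDist_mk]

lemma dist_ne_edgeVertexDist_iff {w a b : V} :
    G.dist a w ≠ edgeVertexDist G w s(a, b) ↔ G.dist b w < G.dist a w := by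
  rw [edgeVertexDist_mk]
  omega

namespace Connected

variable (hG : G.Connected)
include hG

lemma edgeVertexDist_pos_of_notMem {w : V} {e : Sym2 V} (h : w ∉ e) :
    0 < edgeVertexDist G w e := by
  induction e using Sym2.ind with
  | _ a b =>
    simp only [Sym2.mem_iff, not_or] at h
    exact lt_min (hG.pos_dist_of_ne (Ne.symm h.1)) (hG.pos_dist_of_ne (Ne.symm h.2))

lemma mixedDist_inl_ne_inl {a b : V} (hab : a ≠ b) :
    mixedDist G a (.inl a) ≠ mixedDist G a (.inl b) := by
  simpa using (hG.pos_dist_of_ne hab.symm).ne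

lemma mixedDist_inl_ne_inr {a : V} {e : G.edgeSet} (ha : a ∉ (e : Sym2 V)) :
    mixedDist G a (.inl a) ≠ mixedDist G a (.inr e) := by
  simpa using (hG.edgeVertexDist_pos_of_notMem ha).ne

lemma mixedDist_inr_ne_inr {x : V} {e f : G.edgeSet} (hxe : x ∈ (e : Sym2 V))
    (hxf : x ∉ (f : Sym2 V)) : mixedDist G x (.inr e) ≠ mixedDist G x (.inr f) := by
  simpa [edgeVertexDist_eq_zero_of_mem hxe] using (hG.edgeVertexDist_pos_of_notMem hxf).ne

end Connected

namespace IsUniversal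

variable {u : V} (hu : G.IsUniversal u)
include hu

lemma dist_eq_one {w : V} (hw : u ≠ w) : G.dist u w = 1 :=
  dist_eq_one_iff_adj.2 (hu hw)

lemma dist_le_one (w : V) : G.dist u w ≤ 1 := by
  rcases eq_or_ne u w with rfl | hw
  · simp
  · exact (hu.dist_eq_one hw).le

lemma dist_eq_two_of_not_adj {a b : V} (hab : a ≠ b) (h : ¬G.Adj a b) : G.dist a b = 2 := by
  have hG := Connected.of_isUniversal hu
  have hle : G.dist a b ≤ 2 := calc
    G.dist a b ≤ G.dist u a + G.dist u b := dist_comm (u := u) ▸ hG.dist_triangle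
    _ ≤ 1 + 1 := add_le_add (hu.dist_le_one a) (hu.dist_le_one b)
  have := hG.one_lt_dist_of_ne_of_not_adj hab h
  omega

lemma mem_of_isMixedResolving {W : Set V} (hW : IsMixedResolving G W) {x : V} (hx : u ≠ x) :
    x ∈ W := by
  obtain ⟨w, hwW, hw⟩ := hW (.inl u) (.inr ⟨s(u, x), hu hx⟩) Sum.inl_ne_inr
  have hlt : G.dist x w < G.dist u w := dist_ne_edgeVertexDist_iff.1 hw
  have hxw : x = w := (Connected.of_isUniversal hu).dist_eq_zero_iff.1
    (by have := hu.dist_le_one w; omega)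
  exact hxw ▸ hwW

variable (huniq : ∀ x, G.IsUniversal x → x = u)
include huniq

lemma exists_ne_mixedDist_inl_ne_inr (a : V) (e : G.edgeSet) :
    ∃ w, w ≠ u ∧ mixedDist G w (.inl a) ≠ mixedDist G w (.inr e) := by
  have hG := Connected.of_isUniversal hu
  obtain ⟨e, he⟩ := e
  by_cases hae : a ∈ e
  · obtain ⟨c, rfl⟩ := Sym2.mem_iff_exists.1 hae
    have hac : a ≠ c := G.ne_of_adj he
    simp only [mixedDist_inl, mixedDist_inr, dist_ne_edgeVertexDist_iff]
    by_cases hc : c = u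
    · subst hc
      obtain ⟨z, haz, hz⟩ : ∃ z, a ≠ z ∧ ¬G.Adj a z := by
        simpa [IsUniversal] using mt (huniq a) hac
      have hcz : c ≠ z := by rintro rfl; exact hz he
      refine ⟨z, hcz.symm, ?_⟩
      rw [hu.dist_eq_one hcz, hu.dist_eq_two_of_not_adj haz hz]
      norm_num
    · exact ⟨c, hc, by simpa using hG.pos_dist_of_ne hac⟩
  · by_cases ha : a = u
    · subst ha
      obtain ⟨b, c⟩ := e
      have hab : a ≠ b := fun h => hae (h ▸ Sym2.mem_mk_left a c)
      refine ⟨b, hab.symm, ?_⟩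
      simp [hu.dist_eq_one hab, edgeVertexDist_eq_zero_of_mem (Sym2.mem_mk_left b c)]
    · exact ⟨a, ha, hG.mixedDist_inl_ne_inr hae⟩

lemma isMixedResolving_compl_singleton : IsMixedResolving G {u}ᶜ := by
  have hG := Connected.of_isUniversal hu
  rintro (a | e) (b | f) hne
  · have hab : a ≠ b := fun h => hne (congrArg _ h)
    by_cases ha : a = u
    · exact ⟨b, (ha ▸ hab).symm, (hG.mixedDist_inl_ne_inl hab.symm).symm⟩
    · exact ⟨a, ha, hG.mixedDist_inl_ne_inl hab⟩
  · exact hu.exists_ne_mixedDist_inl_ne_inr huniq a f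
  · obtain ⟨w, hw, h⟩ := hu.exists_ne_mixedDist_inl_ne_inr huniq b e
    exact ⟨w, hw, h.symm⟩
  · have hef : (e : Sym2 V) ≠ f := fun h => hne (congrArg _ (Subtype.ext h))
    obtain ⟨x, hxe, hxf⟩ := Sym2.exists_mem_notMem_of_ne (G.not_isDiag_of_mem_edgeSet e.2) hef
    obtain ⟨y, hyf, hye⟩ :=
      Sym2.exists_mem_notMem_of_ne (G.not_isDiag_of_mem_edgeSet f.2) (Ne.symm hef)
    by_cases hx : x = u
    · have hy : y ≠ u := by rintro rfl; exact hye (hx ▸ hxe)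
      exact ⟨y, hy, (hG.mixedDist_inr_ne_inr hyf hye).symm⟩
    · exact ⟨x, hx, hG.mixedDist_inr_ne_inr hxe hxf⟩

end IsUniversal

end SimpleGraph

lemma mdim_eq_card_of_forall_subset [Fintype V] {G : SimpleGraph V} {W₀ : Finset V}
    (h₀ : IsMixedResolving G W₀) (hmin : ∀ W : Finset V, IsMixedResolving G W → W₀ ⊆ W) :
    mdim G = W₀.card :=
  le_antisymm (Nat.sInf_le ⟨W₀, rfl, h₀⟩)
    (le_csInf ⟨_, W₀, rfl, h₀⟩ fun _ ⟨W, hW, hWres⟩ => hW ▸ Finset.card_le_card (hmin W hWres))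

theorem stmt_9_general [Fintype V] (G : SimpleGraph V)
    (huniq : ∃! x : V, ∀ z : V, z ≠ x → G.Adj x z) :
    mdim G = Fintype.card V - 1 := by
  classical
  obtain ⟨u, hu, huniq⟩ := huniq
  have hu : G.IsUniversal u := fun w hw => hu w hw.symm
  have huniq : ∀ x, G.IsUniversal x → x = u := fun x hx => huniq x fun z hz => hx (Ne.symm hz)
  rw [← Finset.card_univ, ← Finset.card_erase_of_mem (Finset.mem_univ u)]
  refine mdim_eq_card_of_forall_subset ?_ fun W hW x hx =>
    hu.mem_of_isMixedResolving hW (Finset.ne_of_mem_erase hx).symm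
  simpa [Set.compl_eq_univ_sdiff] using hu.isMixedResolving_compl_singleton huniq

/-- A connected graph on `n ≥ 2` vertices with exactly one universal vertex
has `mdim G = n - 1`. -/
theorem stmt_9 [Fintype V] (G : SimpleGraph V) (hG : G.Connected)
    (hn : 2 ≤ Fintype.card V)
    (huniq : ∃! x : V, ∀ z : V, z ≠ x → G.Adj x z) :
    mdim G = Fintype.card V - 1 :=
  stmt_9_general G huniq
end

section
/- If G has exactly one universal vertex x, then V(G) \ {x} is a mixed resolving set for G. -/
open SimpleGraph

variable {V : Type*}

section helpers
variable {G : SimpleGraph V} {x : V}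

lemma myReach (hx : ∀ z : V, z ≠ x → G.Adj x z) {u w : V} (h : u ≠ w) :
    G.Reachable u w := by
  rcases eq_or_ne u x with rfl | hu
  · exact (hx w h.symm).reachable
  · rcases eq_or_ne w x with rfl | hw
    · exact ((hx u hu).symm).reachable
    · exact ((hx u hu).symm.reachable.trans (hx w hw).reachable)

lemma myPos (hx : ∀ z : V, z ≠ x → G.Adj x z) {u w : V} (h : u ≠ w) :
    0 < G.dist u w :=
  (myReach hx h).pos_dist_of_ne h

lemma inEdgeCase (hx : ∀ z : V, z ≠ x → G.Adj x z)
    (huniq : ∀ y : V, (∀ z : V, z ≠ y → G.Adj y z) → y = x)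
    {v b : V} (hvb : G.Adj v b) :
    ∃ w, w ≠ x ∧ G.dist v w ≠ min (G.dist v w) (G.dist b w) := by
  rcases eq_or_ne b x with rfl | hbx
  · -- edge is {v, x}; pick a non-neighbor of v
    have hvx : v ≠ b := hvb.ne
    have hnu : ¬ ∀ z, z ≠ v → G.Adj v z := fun h => hvx (huniq v h)
    push_neg at hnu
    obtain ⟨z, hzv, hnadj⟩ := hnu
    have hzx : z ≠ b := by rintro rfl; exact hnadj hvb
    refine ⟨z, hzx, ?_⟩
    have h1 : G.dist b z = 1 := dist_eq_one_iff_adj.mpr (hx z hzx)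
    have h2 : G.dist v z ≠ 1 := fun h => hnadj (dist_eq_one_iff_adj.mp h)
    have h3 := myPos hx hzv.symm
    rw [h1, min_eq_right h3]
    exact h2
  · refine ⟨b, hbx, ?_⟩
    have h1 := myPos hx hvb.ne
    rw [SimpleGraph.dist_self, min_eq_right (Nat.zero_le _)]
    omega

lemma vertEdge (hx : ∀ z : V, z ≠ x → G.Adj x z)
    (huniq : ∀ y : V, (∀ z : V, z ≠ y → G.Adj y z) → y = x)
    (v : V) {a b : V} (hab : G.Adj a b) :
    ∃ w, w ≠ x ∧ G.dist v w ≠ min (G.dist a w) (G.dist b w) := by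
  rcases eq_or_ne v a with rfl | hva
  · exact inEdgeCase hx huniq hab
  rcases eq_or_ne v b with rfl | hvb
  · obtain ⟨w, hwx, hw⟩ := inEdgeCase hx huniq hab.symm
    exact ⟨w, hwx, by rwa [min_comm]⟩
  rcases eq_or_ne a x with rfl | hax
  · refine ⟨b, hab.ne', ?_⟩
    have h1 := myPos hx hvb
    rw [SimpleGraph.dist_self, min_eq_right (Nat.zero_le _)]
    omega
  · refine ⟨a, hax, ?_⟩
    have h1 := myPos hx hva
    rw [SimpleGraph.dist_self, min_eq_left (Nat.zero_le _)]
    omega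

lemma pickW (x a b c d : V) (hab : a ≠ b) (hcd : c ≠ d) (hne : s(a,b) ≠ s(c,d)) :
    ∃ w, w ≠ x ∧ (((w = a ∨ w = b) ∧ w ≠ c ∧ w ≠ d) ∨
      ((w = c ∨ w = d) ∧ w ≠ a ∧ w ≠ b)) := by
  rcases eq_or_ne a c with rfl | hac
  · have hbd : b ≠ d := by rintro rfl; exact hne rfl
    rcases eq_or_ne b x with rfl | hbx
    · exact ⟨d, hbd.symm, Or.inr ⟨Or.inr rfl, hcd.symm, hbd.symm⟩⟩
    · exact ⟨b, hbx, Or.inl ⟨Or.inr rfl, hab.symm, hbd⟩⟩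
  rcases eq_or_ne a d with rfl | had
  · have hbc : b ≠ c := by rintro rfl; exact hne (Sym2.eq_swap)
    rcases eq_or_ne b x with rfl | hbx
    · exact ⟨c, hbc.symm, Or.inr ⟨Or.inl rfl, hcd, hbc.symm⟩⟩
    · exact ⟨b, hbx, Or.inl ⟨Or.inr rfl, hbc, hab.symm⟩⟩
  rcases eq_or_ne a x with rfl | hax
  · rcases eq_or_ne b c with rfl | hbc
    · exact ⟨d, had.symm, Or.inr ⟨Or.inr rfl, had.symm, hcd.symm⟩⟩
    rcases eq_or_ne b d with rfl | hbd
    · exact ⟨c, hac.symm, Or.inr ⟨Or.inl rfl, hac.symm, hbc.symm⟩⟩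
    · exact ⟨b, hab.symm, Or.inl ⟨Or.inr rfl, hbc, hbd⟩⟩
  · exact ⟨a, hax, Or.inl ⟨Or.inl rfl, hac, had⟩⟩

lemma edgeKey (hx : ∀ z : V, z ≠ x → G.Adj x z) {w p q r s : V}
    (hw : w = p ∨ w = q) (hr : w ≠ r) (hs : w ≠ s) :
    min (G.dist p w) (G.dist q w) ≠ min (G.dist r w) (G.dist s w) := by
  have h1 : min (G.dist p w) (G.dist q w) = 0 := by
    rcases hw with rfl | rfl <;> simp [SimpleGraph.dist_self]
  have h2 := myPos hx (Ne.symm hr)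
  have h3 := myPos hx (Ne.symm hs)
  rw [h1]
  exact (lt_min h2 h3).ne

end helpers

/-- If `x` is the unique universal vertex of `G`, then `V(G) \ {x}` is a
mixed resolving set for `G`. -/
theorem stmt_10 (G : SimpleGraph V) [Fintype V] (x : V)
    (hx : ∀ z : V, z ≠ x → G.Adj x z)
    (huniq : ∀ y : V, (∀ z : V, z ≠ y → G.Adj y z) → y = x) :
    IsMixedResolving G ({x}ᶜ : Set V) := by
  intro p q hpq
  rcases p with v | ⟨e, he⟩
  · rcases q with u | ⟨f, hf⟩
    · have hvu : v ≠ u := by simpa using hpq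
      rcases eq_or_ne v x with rfl | hvx
      · refine ⟨u, hvu.symm, ?_⟩
        have h1 := myPos hx hvu
        simp only [mixedDist, SimpleGraph.dist_self]
        omega
      · refine ⟨v, hvx, ?_⟩
        have h1 := myPos hx hvu.symm
        simp only [mixedDist, SimpleGraph.dist_self]
        omega
    · induction f using Sym2.ind with
      | _ a b =>
        have hab : G.Adj a b := hf
        obtain ⟨w, hwx, hw⟩ := vertEdge hx huniq v hab
        exact ⟨w, hwx, by simpa [mixedDist, edgeVertexDist] using hw⟩
  · induction e using Sym2.ind with
    | _ a b =>
      have hab : G.Adj a b := he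
      rcases q with u | ⟨f, hf⟩
      · obtain ⟨w, hwx, hw⟩ := vertEdge hx huniq u hab
        exact ⟨w, hwx, by simpa [mixedDist, edgeVertexDist] using hw.symm⟩
      · induction f using Sym2.ind with
        | _ c d =>
          have hcd : G.Adj c d := hf
          have hne : s(a,b) ≠ s(c,d) := by
            intro h; exact hpq (by simp [h])
          obtain ⟨w, hwx, hw⟩ := pickW x a b c d hab.ne hcd.ne hne
          refine ⟨w, hwx, ?_⟩
          simp only [mixedDist, edgeVertexDist, Sym2.lift_mk]
          rcases hw with ⟨hin, hr, hs⟩ | ⟨hin, hr, hs⟩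
          · exact edgeKey hx hin hr hs
          · exact (edgeKey hx hin hr hs).symm
end

section
/- If v is a cut vertex of a connected graph G, then v has no maximal neighbor in G. -/
open SimpleGraph

variable {V : Type*}

/-- `v` is a cut vertex of `G`: deleting `v` disconnects the graph. -/
def IsCutVertex (G : SimpleGraph V) (v : V) : Prop :=
  ¬ (G.induce {w | w ≠ v}).Connected

private lemma aux_reach (G : SimpleGraph V) (v y : V) (hmax : IsMaxNeighbor G v y) :
    ∀ n (a b : V) (ha : a ≠ v) (hb : b ≠ v) (p : G.Walk a b), p.length ≤ n →
      (G.induce {w | w ≠ v}).Reachable ⟨a, ha⟩ ⟨b, hb⟩ := by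
  have hyv : y ≠ v := fun h => (h ▸ hmax.1).ne' rfl
  intro n
  induction n with
  | zero =>
    intro a b ha hb p hp
    have : a = b := by
      cases p with
      | nil => rfl
      | cons h q => simp at hp
    subst this; rfl
  | succ n ih =>
    intro a b ha hb p hp
    cases p with
    | nil => rfl
    | @cons _ c _ h q =>
      by_cases hc : c = v
      · cases q with
        | nil => exact absurd hc hb
        | @cons _ d _ h' q' =>
          have hdv : G.Adj v d := hc ▸ h'
          have hd : d ≠ v := fun hh => (hh ▸ hdv).ne' rfl
          have hrest : (G.induce {w | w ≠ v}).Reachable ⟨d, hd⟩ ⟨b, hb⟩ := by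
            apply ih d b hd hb q'
            simp [SimpleGraph.Walk.length_cons] at hp
            omega
          have had : (G.induce {w | w ≠ v}).Reachable ⟨a, ha⟩ ⟨d, hd⟩ := by
            have hav : G.Adj v a := hc ▸ h.symm
            by_cases hay : a = y
            · by_cases hdy : d = y
              · subst hay; subst hdy; rfl
              · have : G.Adj y d := hmax.2 d hdv hdy
                subst hay
                exact SimpleGraph.Adj.reachable (by exact this)
            · have hya : G.Adj y a := hmax.2 a hav hay
              by_cases hdy : d = y
              · subst hdy
                exact SimpleGraph.Adj.reachable (by exact hya.symm)
              · have hyd : G.Adj y d := hmax.2 d hdv hdy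
                have r1 : (G.induce {w | w ≠ v}).Adj ⟨a, ha⟩ ⟨y, hyv⟩ := hya.symm
                have r2 : (G.induce {w | w ≠ v}).Adj ⟨y, hyv⟩ ⟨d, hd⟩ := hyd
                exact (r1.reachable).trans r2.reachable
          exact had.trans hrest
      · have : (G.induce {w | w ≠ v}).Adj ⟨a, ha⟩ ⟨c, hc⟩ := h
        refine this.reachable.trans ?_
        apply ih c b hc hb q
        simp [SimpleGraph.Walk.length_cons] at hp
        omega

/-- A cut vertex of a connected graph has no maximal neighbor. -/
theorem stmt_14 (G : SimpleGraph V) (hG : G.Connected) (v : V)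
    (hv : IsCutVertex G v) :
    ¬ ∃ y : V, IsMaxNeighbor G v y := by
  rintro ⟨y, hmax⟩
  apply hv
  have hyv : y ≠ v := fun h => (h ▸ hmax.1).ne' rfl
  rw [SimpleGraph.connected_iff]
  refine ⟨?_, ⟨⟨y, hyv⟩⟩⟩
  rintro ⟨a, ha⟩ ⟨b, hb⟩
  obtain ⟨p⟩ := hG.preconnected a b
  exact aux_reach G v y hmax p.length a b ha hb p le_rfl
end
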